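/- In the graph G_k of the even-hole-free construction, the path Q from c₁ to b_k induced by the union of the connecting (c_i, b_{i-1})-paths for 2 ≤ i ≤ k together with the triangle vertices b_j, c_j for 1 ≤ j ≤ k is an isometric path of G_k of length k² + k - 1; moreover, for every i, the vertices b_i and c_i are at the same distance from r_k. -/

import Mathlib

open SimpleGraph

/-- Raw vertex names for the even-hole-free construction `G_k`:
`b i`, `c i` are triangle vertices of the `i`-th copy of `B_k` (0-indexed),
`p i j` (for `0 ≤ j ≤ k`) are the vertices of the pendant path of the `i`-th copy, with
`p i 0 = a_i` (the third triangle vertex) and `p i k = r_i`,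
`rp i j` (for `0 ≤ j ≤ k-2`) are the internal vertices of the length-`k` path joining
`r_i` and `r_{i+1}`, and
`cb i j` (for `0 ≤ j ≤ k-1`) are the internal vertices of the length-`(k+1)` path joining
`c_{i+1}` and `b_i`. -/
inductive Raw : Type
  | b : ℕ → Raw
  | c : ℕ → Raw
  | p : ℕ → ℕ → Raw
  | rp : ℕ → ℕ → Raw
  | cb : ℕ → ℕ → Raw
deriving DecidableEq

/-- Validity of a raw vertex name for the construction with parameter `k`. -/
def Valid (k : ℕ) : Raw → Prop
  | .b i => i < k
  | .c i => i < k
  | .p i j => i < k ∧ j ≤ k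
  | .rp i j => i + 1 < k ∧ j + 1 < k
  | .cb i j => i + 1 < k ∧ j < k

/-- The vertex set of `G_k`. -/
def Vk (k : ℕ) : Type := {x : Raw // Valid k x}

/-- The base adjacency relation of `G_k` on raw vertex names (to be symmetrized). -/
def GkRel (k : ℕ) : Raw → Raw → Prop := fun x y =>
  (∃ i, x = .p i 0 ∧ y = .b i) ∨
  (∃ i, x = .p i 0 ∧ y = .c i) ∨
  (∃ i, x = .b i ∧ y = .c i) ∨
  (∃ i j, x = .p i j ∧ y = .p i (j + 1)) ∨
  (∃ i, x = .p i k ∧ y = .rp i 0) ∨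
  (∃ i j, x = .rp i j ∧ y = .rp i (j + 1)) ∨
  (∃ i, x = .rp i (k - 2) ∧ y = .p (i + 1) k) ∨
  (∃ i, x = .c (i + 1) ∧ y = .cb i 0) ∨
  (∃ i j, x = .cb i j ∧ y = .cb i (j + 1)) ∨
  (∃ i, x = .cb i (k - 1) ∧ y = .b i)

/-- The graph `G_k` of the even-hole-free construction: `k` copies of `B_k` (a triangle
`a_i b_i c_i` with a pendant path of length `k` from `a_i` ending at `r_i`), with `r_i`
joined to `r_{i+1}` by a path of length `k` and `c_{i+1}` joined to `b_i` by a path of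
length `k + 1`. -/
def Gk (k : ℕ) : SimpleGraph (Vk k) :=
  SimpleGraph.fromRel (fun x y => GkRel k x.val y.val)

/-- A cycle is induced (a hole, if of length at least 4) if it has no chords: every edge
of the graph between vertices of the cycle is an edge of the cycle. -/
def IsInducedCycle {V : Type*} (G : SimpleGraph V) {v : V} (cyc : G.Walk v v) : Prop :=
  cyc.IsCycle ∧ ∀ x ∈ cyc.support, ∀ y ∈ cyc.support, G.Adj x y → s(x, y) ∈ cyc.edges

/-- A walk is an isometric path if it is a path and its length equals the distance
between its end-vertices. -/
def IsometricPath {V : Type*} (G : SimpleGraph V) {u v : V} (p : G.Walk u v) : Prop :=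
  p.IsPath ∧ p.length = G.dist u v

/-!
Both parts are potential arguments: if `f` changes by at most one along every edge, then
`f v ≤ f u + dist u v`. For the first part take `qPos`, the position along `Q`, extended to
the other vertices; it gives `dist c₁ b_k ≥ k² + k - 1`. Since `qPos` is injective on `Q`
with values in `[0, k² + k - 1]`, no path inside `Q` is longer than that.
For the second part, in the 0-based indexing of `Raw`, `rDepth` gives
`dist r_{k-1} b_i, dist r_{k-1} c_i ≥ (k - i) k + 1`, and both bounds are attained: along the
`r`-paths to `r_i`, down the pendant path to `a_i`, then one edge to `b_i` or `c_i`.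
-/

lemma Nat.sub_mul_eq_sub_succ_mul_add {n m i : ℕ} (h : i < n) :
    (n - i) * m = (n - (i + 1)) * m + m := by
  rw [show n - i = n - (i + 1) + 1 by omega, add_one_mul]

namespace SimpleGraph

variable {V : Type*} {G : SimpleGraph V} {u v w : V}

lemma edist_le_add_of_le {m n : ℕ} (huv : G.edist u v ≤ m) (hvw : G.edist v w ≤ n) :
    G.edist u w ≤ (m + n : ℕ) :=
  G.edist_triangle.trans (by push_cast; exact add_le_add huv hvw)

lemma edist_le_succ_of_adj {n : ℕ} (huv : G.edist u v ≤ n) (hvw : G.Adj v w) :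
    G.edist u w ≤ (n + 1 : ℕ) :=
  edist_le_add_of_le huv (edist_eq_one_iff_adj.2 hvw).le

lemma dist_le_of_edist_le {n : ℕ} (h : G.edist u v ≤ n) : G.dist u v ≤ n :=
  ENat.toNat_le_of_le_natCast h

lemma Walk.le_add_length {f : V → ℕ} (hf : ∀ ⦃x y⦄, G.Adj x y → f y ≤ f x + 1)
    (p : G.Walk u v) : f v ≤ f u + p.length := by
  induction p with
  | nil => simp
  | cons h _ ih =>
    have := hf h
    rw [Walk.length_cons]
    omega

lemma Reachable.le_add_dist {f : V → ℕ} (hf : ∀ ⦃x y⦄, G.Adj x y → f y ≤ f x + 1)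
    (h : G.Reachable u v) : f v ≤ f u + G.dist u v := by
  obtain ⟨p, hp⟩ := h.exists_walk_length_eq_dist
  exact hp ▸ p.le_add_length hf

lemma Walk.IsPath.length_le_of_injOn {p : G.Walk u v} (hp : p.IsPath) {f : V → ℕ} {N : ℕ}
    (hinj : Set.InjOn f {x | x ∈ p.support}) (hle : ∀ x ∈ p.support, f x ≤ N) :
    p.length ≤ N := by
  classical
  have hcard := Finset.card_le_card_of_injOn f (s := p.support.toFinset)
    (t := Finset.range (N + 1))
    (fun x hx => Finset.mem_range_succ_iff.2 (hle x (List.mem_toFinset.1 hx)))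
    (by simpa using hinj)
  rw [List.toFinset_card_of_nodup hp.support_nodup, Walk.length_support,
    Finset.card_range] at hcard
  omega

end SimpleGraph

namespace Gk

variable {k : ℕ}

lemma ne_of_gkRel {x y : Raw} (h : GkRel k x y) : x ≠ y := by
  rcases h with ⟨i, rfl, rfl⟩ | ⟨i, rfl, rfl⟩ | ⟨i, rfl, rfl⟩ | ⟨i, j, rfl, rfl⟩ |
    ⟨i, rfl, rfl⟩ | ⟨i, j, rfl, rfl⟩ | ⟨i, rfl, rfl⟩ | ⟨i, rfl, rfl⟩ | ⟨i, j, rfl, rfl⟩ |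
    ⟨i, rfl, rfl⟩ <;> simp

lemma adj_of_gkRel {x y : Vk k} (h : GkRel k x.1 y.1) : (Gk k).Adj x y :=
  (fromRel_adj ..).2 ⟨fun e => ne_of_gkRel h (congrArg Subtype.val e), .inl h⟩

lemma le_succ_of_adj (f : Raw → ℕ)
    (hf : ∀ {x y}, Valid k x → Valid k y → GkRel k x y →
      f x ≤ f y + 1 ∧ f y ≤ f x + 1) :
    ∀ ⦃x y : Vk k⦄, (Gk k).Adj x y → f y.1 ≤ f x.1 + 1 := by
  intro x y h
  rcases ((fromRel_adj ..).1 h).2 with h | h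
  · exact (hf x.2 y.2 h).2
  · exact (hf y.2 x.2 h).1

-- The position along `Q`, continued into each pendant path from both of its ends.
def qPos (k : ℕ) : Raw → ℕ
  | .c i => i * (k + 2)
  | .b i => i * (k + 2) + 1
  | .cb i j => i * (k + 2) + 1 + (k - j)
  | .p i j => min (i * (k + 2) + 1 + j) (i * k + 2 * k + 1 - j)
  | .rp i j => i * k + k + j + 2

lemma qPos_gkRel {x y : Raw} (hx : Valid k x) (hy : Valid k y) (h : GkRel k x y) :
    qPos k x ≤ qPos k y + 1 ∧ qPos k y ≤ qPos k x + 1 := by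
  rcases h with ⟨i, rfl, rfl⟩ | ⟨i, rfl, rfl⟩ | ⟨i, rfl, rfl⟩ | ⟨i, j, rfl, rfl⟩ |
    ⟨i, rfl, rfl⟩ | ⟨i, j, rfl, rfl⟩ | ⟨i, rfl, rfl⟩ | ⟨i, rfl, rfl⟩ | ⟨i, j, rfl, rfl⟩ |
    ⟨i, rfl, rfl⟩ <;>
    simp only [qPos, Valid, add_mul, mul_add, one_mul] at hx hy ⊢ <;> omega

def rDepth (k : ℕ) : Raw → ℕ
  | .b i => (k - i) * k + 1
  | .c i => (k - i) * k + 1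
  | .p i j => (k - (i + 1)) * k + (k - j)
  | .rp i j => (k - (i + 2)) * k + (k - 1 - j)
  | .cb i j => (k - (i + 1)) * k + j + 2

lemma rDepth_gkRel {x y : Raw} (hx : Valid k x) (hy : Valid k y) (h : GkRel k x y) :
    rDepth k x ≤ rDepth k y + 1 ∧ rDepth k y ≤ rDepth k x + 1 := by
  rcases h with ⟨i, rfl, rfl⟩ | ⟨i, rfl, rfl⟩ | ⟨i, rfl, rfl⟩ | ⟨i, j, rfl, rfl⟩ |
    ⟨i, rfl, rfl⟩ | ⟨i, j, rfl, rfl⟩ | ⟨i, rfl, rfl⟩ | ⟨i, rfl, rfl⟩ | ⟨i, j, rfl, rfl⟩ |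
    ⟨i, rfl, rfl⟩ <;>
    simp only [rDepth, Valid, add_assoc, Nat.reduceAdd] at hx hy ⊢
  all_goals first
    | omega
    | have := Nat.sub_mul_eq_sub_succ_mul_add (m := k) (i := i) (by omega : i < k); omega
    | have := Nat.sub_mul_eq_sub_succ_mul_add (m := k) (i := i + 1) (by omega : i + 1 < k)
      simp only [add_assoc, Nat.reduceAdd] at this; omega

def OnQ (x : Raw) : Prop :=
  (∃ i, x = .b i) ∨ (∃ i, x = .c i) ∨ ∃ i j, x = .cb i j

def qDecode (k n : ℕ) : Raw :=
  if n % (k + 2) = 0 then .c (n / (k + 2))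
  else if n % (k + 2) = 1 then .b (n / (k + 2))
  else .cb (n / (k + 2)) (k + 1 - n % (k + 2))

lemma qDecode_qPos {x : Raw} (hx : Valid k x) (hq : OnQ x) : qDecode k (qPos k x) = x := by
  have hdiv : ∀ i r, r < k + 2 →
      (i * (k + 2) + r) / (k + 2) = i ∧ (i * (k + 2) + r) % (k + 2) = r :=
    fun i r hr => (Nat.div_mod_unique (by omega)).2 ⟨by ring, hr⟩
  rcases hq with ⟨i, rfl⟩ | ⟨i, rfl⟩ | ⟨i, j, rfl⟩ <;> simp only [Valid] at hx
  · obtain ⟨h₁, h₂⟩ := hdiv i 1 (by omega)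
    rw [qPos, qDecode, h₁, h₂, if_neg one_ne_zero, if_pos rfl]
  · rw [qPos, qDecode, Nat.mul_div_cancel _ (by omega), Nat.mul_mod_left, if_pos rfl]
  · obtain ⟨h₁, h₂⟩ := hdiv i (1 + (k - j)) (by omega)
    rw [qPos, add_assoc, qDecode, h₁, h₂, if_neg (by omega), if_neg (by omega),
      show k + 1 - (1 + (k - j)) = j by omega]

lemma qPos_le {x : Raw} (hx : Valid k x) (hq : OnQ x) : qPos k x ≤ (k - 1) * (k + 2) + 1 := by
  rcases hq with ⟨i, rfl⟩ | ⟨i, rfl⟩ | ⟨i, j, rfl⟩ <;> simp only [Valid, qPos] at hx ⊢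
  · have := Nat.mul_le_mul_right (k + 2) (show i ≤ k - 1 by omega)
    omega
  · have := Nat.mul_le_mul_right (k + 2) (show i ≤ k - 1 by omega)
    omega
  · have := Nat.mul_le_mul_right (k + 2) (show i + 1 ≤ k - 1 by omega)
    rw [add_one_mul] at this
    omega

lemma edist_pendant_le {i : ℕ} (hi : i < k) :
    ∀ j (hj : j ≤ k), (Gk k).edist ⟨.p i 0, hi, Nat.zero_le k⟩ ⟨.p i j, hi, hj⟩ ≤ j
  | 0, _ => SimpleGraph.edist_self.le
  | j + 1, hj =>
    edist_le_succ_of_adj (edist_pendant_le hi j (by omega)) (adj_of_gkRel (by simp [GkRel]))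

lemma edist_rPath_le {i : ℕ} (hi : i + 1 < k) :
    ∀ j (hj : j + 1 < k),
      (Gk k).edist ⟨.p i k, by omega, le_rfl⟩ ⟨.rp i j, hi, hj⟩ ≤ (j + 1 : ℕ)
  | 0, _ => edist_le_succ_of_adj SimpleGraph.edist_self.le (adj_of_gkRel (by simp [GkRel]))
  | j + 1, hj =>
    edist_le_succ_of_adj (edist_rPath_le hi j (by omega)) (adj_of_gkRel (by simp [GkRel]))

lemma edist_rStep_le {i : ℕ} (hi : i + 1 < k) :
    (Gk k).edist ⟨.p i k, by omega, le_rfl⟩ ⟨.p (i + 1) k, hi, le_rfl⟩ ≤ k :=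
  (edist_le_succ_of_adj (edist_rPath_le hi (k - 2) (by omega))
    (adj_of_gkRel (by simp [GkRel]))).trans_eq (congrArg _ (by omega))

lemma edist_rChain_le {i j : ℕ} (hij : i ≤ j) (hj : j < k) :
    (Gk k).edist ⟨.p i k, by omega, le_rfl⟩ ⟨.p j k, hj, le_rfl⟩ ≤ ((j - i) * k : ℕ) := by
  induction j, hij using Nat.le_induction with
  | base => exact SimpleGraph.edist_self.le.trans zero_le
  | succ j hij ih =>
    refine (edist_le_add_of_le (ih (by omega)) (edist_rStep_le hj)).trans_eq (congrArg _ ?_)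
    rw [Nat.sub_mul_eq_sub_succ_mul_add (n := j + 1) (by omega), Nat.add_sub_add_right]

lemma edist_pendant_root_le {i : ℕ} (hi : i < k) :
    (Gk k).edist ⟨.p i 0, hi, Nat.zero_le k⟩ ⟨.p (k - 1) k, by omega, le_rfl⟩ ≤
      ((k - i) * k : ℕ) :=
  (edist_le_add_of_le (edist_pendant_le hi k le_rfl)
    (edist_rChain_le (by omega) (by omega))).trans_eq <| congrArg _ <| by
      rw [Nat.sub_mul_eq_sub_succ_mul_add hi, Nat.sub_sub, Nat.add_comm 1 i, Nat.add_comm k]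

lemma dist_root_eq {i : ℕ} {r x : Vk k} (hr : r.1 = .p (k - 1) k)
    (hx : x.1 = .b i ∨ x.1 = .c i) :
    (Gk k).dist r x = (k - i) * k + 1 := by
  have hi : i < k := by rcases hx with h | h <;> simpa [Valid, h] using x.2
  obtain rfl : r = ⟨.p (k - 1) k, by omega, le_rfl⟩ := Subtype.ext hr
  have hadj : (Gk k).Adj ⟨.p i 0, hi, Nat.zero_le k⟩ x :=
    adj_of_gkRel (by rcases hx with h | h <;> simp [GkRel, h])
  have hle := edist_le_succ_of_adj (edist_comm.trans_le (edist_pendant_root_le hi)) hadj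
  have hlow := (reachable_of_edist_ne_top (hle.trans_lt (ENat.natCast_lt_top _)).ne).le_add_dist
    (le_succ_of_adj (rDepth k) rDepth_gkRel)
  have hx' : rDepth k x.1 = (k - i) * k + 1 := by rcases hx with h | h <;> simp [rDepth, h]
  have hr' : rDepth k (.p (k - 1) k) = 0 := by
    simp [rDepth, Nat.sub_add_cancel (by omega : 1 ≤ k)]
  rw [hx', hr', zero_add] at hlow
  exact le_antisymm (dist_le_of_edist_le hle) (by omega)

theorem isometricPath_of_onQ {a b : Vk k} (ha : a.1 = .c 0) (hb : b.1 = .b (k - 1))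
    (q : (Gk k).Walk a b) (hq : q.IsPath) (hQ : ∀ x ∈ q.support, OnQ x.1) :
    IsometricPath (Gk k) q ∧ q.length = (k - 1) * (k + 2) + 1 := by
  have hlow := q.reachable.le_add_dist (le_succ_of_adj (qPos k) qPos_gkRel)
  simp only [ha, hb, qPos, zero_mul, zero_add] at hlow
  have hup : q.length ≤ (k - 1) * (k + 2) + 1 := by
    refine hq.length_le_of_injOn (f := fun x => qPos k x.1) (fun x hx y hy hxy => Subtype.ext ?_)
      fun x hx => qPos_le x.2 (hQ x hx)
    rw [← qDecode_qPos x.2 (hQ x hx), ← qDecode_qPos y.2 (hQ y hy)]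
    exact congrArg _ hxy
  have := dist_le q
  exact ⟨⟨hq, by omega⟩, by omega⟩

end Gk

open Gk in
theorem Gk_special_path_general (k : ℕ) :
    (∀ (a b : Vk k), a.val = Raw.c 0 → b.val = Raw.b (k - 1) →
      ∀ (q : (Gk k).Walk a b), q.IsPath →
        (∀ x ∈ q.support, (∃ i, Subtype.val x = Raw.b i) ∨
          (∃ i, Subtype.val x = Raw.c i) ∨ (∃ i j, Subtype.val x = Raw.cb i j)) →
        IsometricPath (Gk k) q ∧ q.length = k ^ 2 + k - 1) ∧
    (∀ (i : ℕ), i < k → ∀ (rk bi ci : Vk k),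
      rk.val = Raw.p (k - 1) k → bi.val = Raw.b i → ci.val = Raw.c i →
      (Gk k).dist rk bi = (Gk k).dist rk ci) := by
  refine ⟨fun a b ha hb q hq hQ => ?_, fun i _ rk bi ci hrk hbi hci => ?_⟩
  · obtain ⟨hiso, hlen⟩ := isometricPath_of_onQ ha hb q hq hQ
    refine ⟨hiso, hlen.trans ?_⟩
    have hk : 0 < k := by simpa only [ha, Valid] using a.2
    obtain ⟨m, rfl⟩ : ∃ m, k = m + 1 := ⟨k - 1, by omega⟩
    rw [Nat.add_sub_cancel, show (m + 1) ^ 2 + (m + 1) - 1 = (m + 1) ^ 2 + m by omega]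
    ring
  · rw [dist_root_eq hrk (.inl hbi), dist_root_eq hrk (.inr hci)]

/-- in `G_k`, the path `Q` from `c₁` to `b_k` induced by the union of the
connecting `(c_{i+1}, b_i)`-paths together with the triangle vertices `b_j, c_j` (i.e.,
any path from `c₁` to `b_k` all of whose vertices are of the form `b`, `c` or `cb`) is an
isometric path of `G_k` of length `k² + k - 1`; moreover, for every `i`, the vertices
`b_i` and `c_i` are at the same distance from `r_k`. -/
theorem Gk_special_path (k : ℕ) (hk : 4 ≤ k) :
    (∀ (a b : Vk k), a.val = Raw.c 0 → b.val = Raw.b (k - 1) →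
      ∀ (q : (Gk k).Walk a b), q.IsPath →
        (∀ x ∈ q.support, (∃ i, Subtype.val x = Raw.b i) ∨
          (∃ i, Subtype.val x = Raw.c i) ∨ (∃ i j, Subtype.val x = Raw.cb i j)) →
        IsometricPath (Gk k) q ∧ q.length = k ^ 2 + k - 1) ∧
    (∀ (i : ℕ), i < k → ∀ (rk bi ci : Vk k),
      rk.val = Raw.p (k - 1) k → bi.val = Raw.b i → ci.val = Raw.c i →
      (Gk k).dist rk bi = (Gk k).dist rk ci) :=
  Gk_special_path_general k
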